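/- arXiv:2107.07836 — 6 statements merged into one kernel-verified Lean document; each statement's English description precedes it below -/
import Mathlib

section
/- If there exists a test deciding between two probability distributions with both error probabilities at most ε < 1/2, then their Hellinger affinity is at most 2√(ε(1-ε)). Precisely: let P, Q be probability measures on Ω with densities p, q with respect to Π, and let A ⊆ Ω be measurable with P(Ω∖A) ≤ ε and Q(A) ≤ ε; then ∫_Ω √(pq) dΠ ≤ 2√(ε(1-ε)). -/
open MeasureTheory

/-!
Split the affinity over `A` and `Aᶜ` and apply Cauchy–Schwarz on each piece: it is at most
`√(P(A) Q(A)) + √(P(Aᶜ) Q(Aᶜ)) = √((1 - b) a) + √(b (1 - a))` with `a = Q(A) ≤ ε`, `b = P(Aᶜ) ≤ ε`.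
Writing `a = sin² α`, `b = sin² β`, `ε = sin² θ`, this is `sin (α + β)` with `α + β ≤ 2θ ≤ π/2`,
hence at most `sin 2θ = 2√(ε(1 - ε))`.
-/

theorem sqrt_mul_one_sub_add_sqrt_mul_one_sub_le {a b ε : ℝ} (ha : 0 ≤ a) (hb : 0 ≤ b)
    (haε : a ≤ ε) (hbε : b ≤ ε) (hε : ε ≤ 1 / 2) :
    √((1 - b) * a) + √(b * (1 - a)) ≤ 2 * √(ε * (1 - ε)) := by
  have hε0 : 0 ≤ ε := ha.trans haε
  obtain ⟨x, hx, rfl⟩ : ∃ x, 0 ≤ x ∧ x ^ 2 = a := ⟨√a, Real.sqrt_nonneg a, Real.sq_sqrt ha⟩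
  obtain ⟨y, hy, rfl⟩ : ∃ y, 0 ≤ y ∧ y ^ 2 = b := ⟨√b, Real.sqrt_nonneg b, Real.sq_sqrt hb⟩
  obtain ⟨s, hs, rfl⟩ : ∃ s, 0 ≤ s ∧ s ^ 2 = ε := ⟨√ε, Real.sqrt_nonneg ε, Real.sq_sqrt hε0⟩
  set u := √(1 - x ^ 2)
  set v := √(1 - y ^ 2)
  set t := √(1 - s ^ 2)
  have hu : u ^ 2 = 1 - x ^ 2 := Real.sq_sqrt (by linarith)
  have hv : v ^ 2 = 1 - y ^ 2 := Real.sq_sqrt (by linarith)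
  have ht : t ^ 2 = 1 - s ^ 2 := Real.sq_sqrt (by linarith)
  have htu : t ≤ u := Real.sqrt_le_sqrt (by linarith)
  have htv : t ≤ v := Real.sqrt_le_sqrt (by linarith)
  have hxs : x ≤ s := (pow_le_pow_iff_left₀ hx hs two_ne_zero).1 haε
  have hys : y ≤ s := (pow_le_pow_iff_left₀ hy hs two_ne_zero).1 hbε
  rw [Real.sqrt_mul (by linarith), Real.sqrt_mul (by positivity), Real.sqrt_mul (by positivity),
    Real.sqrt_sq hx, Real.sqrt_sq hy, Real.sqrt_sq hs]
  -- `(v x + y u)² + (u v - x y)² = (x² + u²)(y² + v²) = 1`, so a lower bound `0 ≤ t² - s²`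
  -- on `u v - x y` is an upper bound on `v x + y u`.
  have hcos : t ^ 2 - s ^ 2 ≤ u * v - x * y := by
    nlinarith [mul_le_mul htu htv (Real.sqrt_nonneg _) (Real.sqrt_nonneg _),
      mul_le_mul hxs hys hy hs]
  have hsq : (v * x + y * u) ^ 2 ≤ (2 * (s * t)) ^ 2 := by
    nlinarith [Real.sqrt_nonneg (1 - y ^ 2)]
  exact (pow_le_pow_iff_left₀ (by positivity) (by positivity) two_ne_zero).1 hsq

theorem ENNReal.ofReal_sqrt (x : ℝ) : ENNReal.ofReal √x = ENNReal.ofReal x ^ (1 / 2 : ℝ) := by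
  rcases le_total 0 x with hx | hx
  · rw [ENNReal.ofReal_rpow_of_nonneg hx (by norm_num), Real.sqrt_eq_rpow]
  · rw [Real.sqrt_eq_zero'.2 hx, ENNReal.ofReal_of_nonpos hx,
      ENNReal.zero_rpow_of_pos (by norm_num), ENNReal.ofReal_zero]

theorem lintegral_ofReal_sqrt_mul_le {Ω : Type*} [MeasurableSpace Ω] {μ : Measure Ω}
    {f g : Ω → ℝ} (hf : AEMeasurable f μ) (hg : AEMeasurable g μ) (hf0 : 0 ≤ f) :
    ∫⁻ ω, ENNReal.ofReal √(f ω * g ω) ∂μ ≤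
      (∫⁻ ω, ENNReal.ofReal (f ω) ∂μ) ^ (1 / 2 : ℝ) *
        (∫⁻ ω, ENNReal.ofReal (g ω) ∂μ) ^ (1 / 2 : ℝ) := by
  have hsplit (ω : Ω) : ENNReal.ofReal √(f ω * g ω) =
      ENNReal.ofReal (f ω) ^ (1 / 2 : ℝ) * ENNReal.ofReal (g ω) ^ (1 / 2 : ℝ) := by
    rw [Real.sqrt_mul (hf0 ω), ENNReal.ofReal_mul (Real.sqrt_nonneg _), ENNReal.ofReal_sqrt,
      ENNReal.ofReal_sqrt]
  simp_rw [hsplit]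
  exact ENNReal.lintegral_mul_norm_pow_le hf.ennreal_ofReal hg.ennreal_ofReal (by norm_num)
    (by norm_num) (by norm_num)

section WithDensity

variable {Ω : Type*} [MeasurableSpace Ω] {Pi P Q : Measure Ω} {p q : Ω → ℝ}

theorem setLIntegral_ofReal_sqrt_mul_le [IsFiniteMeasure P] [IsFiniteMeasure Q]
    (hp : Measurable p) (hq : Measurable q) (hp0 : 0 ≤ p)
    (hP : P = Pi.withDensity (fun ω => ENNReal.ofReal (p ω)))
    (hQ : Q = Pi.withDensity (fun ω => ENNReal.ofReal (q ω))) {S : Set Ω} (hS : MeasurableSet S) :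
    ∫⁻ ω in S, ENNReal.ofReal √(p ω * q ω) ∂Pi ≤ ENNReal.ofReal √(P.real S * Q.real S) := by
  calc ∫⁻ ω in S, ENNReal.ofReal √(p ω * q ω) ∂Pi
      ≤ P S ^ (1 / 2 : ℝ) * Q S ^ (1 / 2 : ℝ) := by
        rw [hP, hQ, withDensity_apply _ hS, withDensity_apply _ hS]
        exact lintegral_ofReal_sqrt_mul_le hp.aemeasurable hq.aemeasurable hp0
    _ = ENNReal.ofReal √(P.real S * Q.real S) := by
        rw [Real.sqrt_mul measureReal_nonneg, ENNReal.ofReal_mul (Real.sqrt_nonneg _),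
          ENNReal.ofReal_sqrt, ENNReal.ofReal_sqrt, ofReal_measureReal, ofReal_measureReal]

theorem integral_sqrt_mul_le_of_measurableSet [IsFiniteMeasure P] [IsFiniteMeasure Q]
    (hp : Measurable p) (hq : Measurable q) (hp0 : 0 ≤ p)
    (hP : P = Pi.withDensity (fun ω => ENNReal.ofReal (p ω)))
    (hQ : Q = Pi.withDensity (fun ω => ENNReal.ofReal (q ω))) {A : Set Ω} (hA : MeasurableSet A) :
    ∫ ω, √(p ω * q ω) ∂Pi ≤ √(P.real A * Q.real A) + √(P.real Aᶜ * Q.real Aᶜ) := by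
  rw [integral_eq_lintegral_of_nonneg_ae (.of_forall fun ω => Real.sqrt_nonneg _)
    (by fun_prop : Measurable fun ω => √(p ω * q ω)).aestronglyMeasurable]
  refine ENNReal.toReal_le_of_le_ofReal (by positivity) ?_
  rw [← lintegral_add_compl _ hA, ENNReal.ofReal_add (Real.sqrt_nonneg _) (Real.sqrt_nonneg _)]
  exact add_le_add (setLIntegral_ofReal_sqrt_mul_le hp hq hp0 hP hQ hA)
    (setLIntegral_ofReal_sqrt_mul_le hp hq hp0 hP hQ hA.compl)

end WithDensity

theorem hellinger_affinity_le_of_test_general (Ω : Type*) [MeasurableSpace Ω] (Pi : Measure Ω)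
    (p q : Ω → ℝ) (hp : Measurable p) (hq : Measurable q)
    (hp0 : ∀ ω, 0 ≤ p ω)
    (P Q : Measure Ω) [IsProbabilityMeasure P] [IsProbabilityMeasure Q]
    (hP : P = Pi.withDensity (fun ω => ENNReal.ofReal (p ω)))
    (hQ : Q = Pi.withDensity (fun ω => ENNReal.ofReal (q ω)))
    (ε : ℝ) (hε0 : 0 ≤ ε) (hε : ε < 1 / 2)
    (A : Set Ω) (hA : MeasurableSet A)
    (herr1 : P Aᶜ ≤ ENNReal.ofReal ε) (herr2 : Q A ≤ ENNReal.ofReal ε) :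
    ∫ ω, Real.sqrt (p ω * q ω) ∂Pi ≤ 2 * Real.sqrt (ε * (1 - ε)) := by
  calc ∫ ω, √(p ω * q ω) ∂Pi
      ≤ √(P.real A * Q.real A) + √(P.real Aᶜ * Q.real Aᶜ) :=
        integral_sqrt_mul_le_of_measurableSet hp hq hp0 hP hQ hA
    _ = √((1 - P.real Aᶜ) * Q.real A) + √(P.real Aᶜ * (1 - Q.real A)) := by
        rw [probReal_compl_eq_one_sub hA (μ := Q), probReal_compl_eq_one_sub hA (μ := P),
          sub_sub_cancel]
    _ ≤ 2 * √(ε * (1 - ε)) :=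
        sqrt_mul_one_sub_add_sqrt_mul_one_sub_le measureReal_nonneg measureReal_nonneg
          (ENNReal.toReal_le_of_le_ofReal hε0 herr2) (ENNReal.toReal_le_of_le_ofReal hε0 herr1)
          hε.le

/-- If a test decides between `P` and `Q` with both errors at most `ε < 1/2`, then the
Hellinger affinity `∫ √(pq) dΠ` is at most `2√(ε(1-ε))`. -/
theorem hellinger_affinity_le_of_test (Ω : Type*) [MeasurableSpace Ω] (Pi : Measure Ω)
    [SigmaFinite Pi] (p q : Ω → ℝ) (hp : Measurable p) (hq : Measurable q)
    (hp0 : ∀ ω, 0 ≤ p ω) (hq0 : ∀ ω, 0 ≤ q ω)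
    (P Q : Measure Ω) [IsProbabilityMeasure P] [IsProbabilityMeasure Q]
    (hP : P = Pi.withDensity (fun ω => ENNReal.ofReal (p ω)))
    (hQ : Q = Pi.withDensity (fun ω => ENNReal.ofReal (q ω)))
    (ε : ℝ) (hε0 : 0 ≤ ε) (hε : ε < 1 / 2)
    (A : Set Ω) (hA : MeasurableSet A)
    (herr1 : P Aᶜ ≤ ENNReal.ofReal ε) (herr2 : Q A ≤ ENNReal.ofReal ε) :
    ∫ ω, Real.sqrt (p ω * q ω) ∂Pi ≤ 2 * Real.sqrt (ε * (1 - ε)) :=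
  hellinger_affinity_le_of_test_general Ω Pi p q hp hq hp0 P Q hP hQ ε hε0 hε A hA herr1 herr2
end

section
/- Risk of the optimal Gaussian separating test over convex sets: let M₁, M₂ be nonempty convex compact subsets of ℝ^d at positive Euclidean distance, (μ*, ν*) a pair minimizing ‖μ-ν‖₂ over M₁ × M₂, and φ(ω) = ½(μ*-ν*)ᵀ(ω - ½(μ*+ν*)). Then for every μ ∈ M₁, Prob_{ω ∼ N(μ,I_d)}{φ(ω) < 0} ≤ exp(-‖μ*-ν*‖₂²/8), and for every ν ∈ M₂, Prob_{ω ∼ N(ν,I_d)}{φ(ω) ≥ 0} ≤ exp(-‖μ*-ν*‖₂²/8). -/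
/-!
Let `a = μ* - ν*`. By the variational characterisation of the nearest-point pair of two convex
sets, `⟪a, μ - μ*⟫ ≥ 0` on `M₁` and `⟪a, ν - ν*⟫ ≤ 0` on `M₂`, so for `μ ∈ M₁` the event `φ < 0`
lies in a half-space at distance at least `‖a‖ / 2` from `μ`, and symmetrically for `ν ∈ M₂`.
A Chernoff bound for the standard Gaussian, obtained by shifting its centre by `w` and completing
the square, bounds the mass of the half-space `{ω | ‖w‖² ≤ ⟪w, ω - x⟫}` under `N(x, I)` by
`exp(-‖w‖² / 2)`; with `w = a / 2` this is `exp(-‖a‖² / 8)`.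
-/

open MeasureTheory Real Module
open scoped RealInnerProductSpace

section Separation

variable {F : Type*} [NormedAddCommGroup F] [InnerProductSpace ℝ F]

lemma real_inner_sub_nonpos_of_forall_norm_sub_le {K : Set F} (hK : Convex ℝ K) {u v w : F}
    (hv : v ∈ K) (hmin : ∀ w ∈ K, ‖u - v‖ ≤ ‖u - w‖) (hw : w ∈ K) : ⟪u - v, w - v⟫ ≤ 0 := by
  have : Nonempty K := ⟨⟨v, hv⟩⟩
  refine (norm_eq_iInf_iff_real_inner_le_zero hK hv).mp (le_antisymm ?_ ?_) w hw
  · exact le_ciInf fun w => hmin w w.2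
  · exact ciInf_le ⟨0, Set.forall_mem_range.2 fun _ => norm_nonneg _⟩ (⟨v, hv⟩ : K)

lemma norm_sq_le_inner_of_inner_midpoint_nonpos {p q x ω : F} (hx : ⟪q - p, x - p⟫ ≤ 0)
    (hω : ⟪p - q, ω - (1 / 2 : ℝ) • (p + q)⟫ ≤ 0) :
    ‖(1 / 2 : ℝ) • (q - p)‖ ^ 2 ≤ ⟪(1 / 2 : ℝ) • (q - p), ω - x⟫ := by
  have hω' : ⟪q - p, ω - x⟫ = -⟪q - p, x - p⟫ - ⟪p - q, ω - (1 / 2 : ℝ) • (p + q)⟫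
      + ‖q - p‖ ^ 2 / 2 := by
    rw [← real_inner_self_eq_norm_sq, show p - q = -(q - p) by abel, inner_neg_left,
      show ω - x = -(x - p) + (ω - (1 / 2 : ℝ) • (p + q)) + (1 / 2 : ℝ) • (q - p) by module,
      inner_add_right, inner_add_right, inner_neg_right, real_inner_smul_right]
    ring
  rw [norm_smul, real_inner_smul_left, mul_pow, hω', Real.norm_eq_abs, abs_of_pos one_half_pos]
  linarith

end Separation

section Gaussian

variable {V : Type*} [NormedAddCommGroup V] [InnerProductSpace ℝ V]

lemma exp_neg_norm_sub_sq_div_two_le {x w ω : V} {t : ℝ} (hω : t ≤ ⟪w, ω - x⟫) :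
    rexp (-‖ω - x‖ ^ 2 / 2) ≤ rexp (‖w‖ ^ 2 / 2 - t) * rexp (-‖ω - (x + w)‖ ^ 2 / 2) := by
  have hsq : ‖ω - (x + w)‖ ^ 2 = ‖ω - x‖ ^ 2 - 2 * ⟪w, ω - x⟫ + ‖w‖ ^ 2 := by
    rw [show ω - (x + w) = (ω - x) - w by abel, norm_sub_sq_real, real_inner_comm]
  rw [← Real.exp_add, Real.exp_le_exp, hsq]
  linarith

variable [FiniteDimensional ℝ V] [MeasurableSpace V] [BorelSpace V]

lemma integral_exp_neg_norm_sub_sq_div_two (x : V) :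
    ∫ ω : V, rexp (-‖ω - x‖ ^ 2 / 2) = (2 * π) ^ (finrank ℝ V / 2 : ℝ) := by
  calc ∫ ω : V, rexp (-‖ω - x‖ ^ 2 / 2) = ∫ ω : V, rexp (-(1 / 2) * ‖ω - x‖ ^ 2) := by
        ring_nf
    _ = ∫ ω : V, rexp (-(1 / 2) * ‖ω‖ ^ 2) :=
        integral_sub_right_eq_self (fun ω => rexp (-(1 / 2) * ‖ω‖ ^ 2)) x
    _ = (2 * π) ^ (finrank ℝ V / 2 : ℝ) := by
        rw [GaussianFourier.integral_rexp_neg_mul_sq_norm (by norm_num),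
          show π / (1 / 2) = 2 * π by ring]

lemma integrable_exp_neg_norm_sub_sq_div_two (x : V) :
    Integrable fun ω : V => rexp (-‖ω - x‖ ^ 2 / 2) :=
  .of_integral_ne_zero (by rw [integral_exp_neg_norm_sub_sq_div_two]; positivity)

lemma setIntegral_gaussian_le_of_subset_halfSpace {s : Set V} {x w : V} {t : ℝ}
    (hs : s ⊆ {ω | t ≤ ⟪w, ω - x⟫}) :
    ∫ ω in s, (2 * π) ^ (-(finrank ℝ V : ℝ) / 2) * rexp (-‖ω - x‖ ^ 2 / 2)
      ≤ rexp (‖w‖ ^ 2 / 2 - t) := by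
  set c : ℝ := (2 * π) ^ (-(finrank ℝ V : ℝ) / 2)
  set K : ℝ := rexp (‖w‖ ^ 2 / 2 - t)
  have hc : 0 < c := by positivity
  have hH : MeasurableSet {ω : V | t ≤ ⟪w, ω - x⟫} := measurableSet_le (by fun_prop) (by fun_prop)
  have hf := (integrable_exp_neg_norm_sub_sq_div_two x).const_mul c
  have hg := (integrable_exp_neg_norm_sub_sq_div_two (x + w)).const_mul (c * K)
  calc ∫ ω in s, c * rexp (-‖ω - x‖ ^ 2 / 2)
      ≤ ∫ ω in {ω | t ≤ ⟪w, ω - x⟫}, c * rexp (-‖ω - x‖ ^ 2 / 2) :=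
        setIntegral_mono_set hf.integrableOn (.of_forall fun _ => by positivity)
          (.of_forall hs)
    _ ≤ ∫ ω in {ω | t ≤ ⟪w, ω - x⟫}, c * K * rexp (-‖ω - (x + w)‖ ^ 2 / 2) :=
        setIntegral_mono_on hf.integrableOn hg.integrableOn hH fun ω hω => by
          rw [mul_assoc]
          exact mul_le_mul_of_nonneg_left (exp_neg_norm_sub_sq_div_two_le hω) hc.le
    _ ≤ ∫ ω, c * K * rexp (-‖ω - (x + w)‖ ^ 2 / 2) :=
        setIntegral_le_integral hg (.of_forall fun _ => by positivity)
    _ = K := by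
        rw [integral_const_mul, integral_exp_neg_norm_sub_sq_div_two, mul_right_comm,
          ← Real.rpow_add (by positivity), neg_div, neg_add_cancel, Real.rpow_zero, one_mul]

lemma setIntegral_gaussian_le_of_inner_midpoint_nonpos {p q x : V} (hx : ⟪q - p, x - p⟫ ≤ 0)
    {s : Set V} (hs : ∀ ω ∈ s, ⟪p - q, ω - (1 / 2 : ℝ) • (p + q)⟫ ≤ 0) :
    ∫ ω in s, (2 * π) ^ (-(finrank ℝ V : ℝ) / 2) * rexp (-‖ω - x‖ ^ 2 / 2)
      ≤ rexp (-‖p - q‖ ^ 2 / 8) := by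
  calc _ ≤ rexp (‖(1 / 2 : ℝ) • (q - p)‖ ^ 2 / 2 - ‖(1 / 2 : ℝ) • (q - p)‖ ^ 2) :=
        setIntegral_gaussian_le_of_subset_halfSpace fun ω hω =>
          norm_sq_le_inner_of_inner_midpoint_nonpos hx (hs ω hω)
    _ = rexp (-‖p - q‖ ^ 2 / 8) := by
        rw [norm_smul, norm_sub_rev, Real.norm_eq_abs, abs_of_pos one_half_pos]
        ring_nf

end Gaussian

theorem gaussian_convex_test_risk_general (d : ℕ)
    (M₁ M₂ : Set (EuclideanSpace ℝ (Fin d)))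
    (h₁c : Convex ℝ M₁) (h₂c : Convex ℝ M₂)
    (μs νs : EuclideanSpace ℝ (Fin d)) (hμs : μs ∈ M₁) (hνs : νs ∈ M₂)
    (hmin : ∀ μ ∈ M₁, ∀ ν ∈ M₂, ‖μs - νs‖ ≤ ‖μ - ν‖)
    (φ : EuclideanSpace ℝ (Fin d) → ℝ)
    (hφ : ∀ ω, φ ω = (1 / 2) * ⟪μs - νs, ω - (1 / 2 : ℝ) • (μs + νs)⟫) :
    (∀ μ ∈ M₁,
      (∫ ω in {ω : EuclideanSpace ℝ (Fin d) | φ ω < 0},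
          (2 * Real.pi) ^ (-(d : ℝ) / 2) * Real.exp (-‖ω - μ‖ ^ 2 / 2))
        ≤ Real.exp (-‖μs - νs‖ ^ 2 / 8)) ∧
    (∀ ν ∈ M₂,
      (∫ ω in {ω : EuclideanSpace ℝ (Fin d) | 0 ≤ φ ω},
          (2 * Real.pi) ^ (-(d : ℝ) / 2) * Real.exp (-‖ω - ν‖ ^ 2 / 2))
        ≤ Real.exp (-‖μs - νs‖ ^ 2 / 8)) := by
  refine ⟨fun μ hμ => ?_, fun ν hν => ?_⟩
  · have hx : ⟪νs - μs, μ - μs⟫ ≤ 0 :=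
      real_inner_sub_nonpos_of_forall_norm_sub_le h₁c hμs
        (fun w hw => by rw [norm_sub_rev νs, norm_sub_rev νs]; exact hmin w hw νs hνs) hμ
    have h := setIntegral_gaussian_le_of_inner_midpoint_nonpos hx
      (s := {ω | φ ω < 0}) fun ω (hω : φ ω < 0) => by rw [hφ] at hω; linarith
    rwa [finrank_euclideanSpace_fin] at h
  · have hx : ⟪μs - νs, ν - νs⟫ ≤ 0 :=
      real_inner_sub_nonpos_of_forall_norm_sub_le h₂c hνs (hmin μs hμs) hν
    have h := setIntegral_gaussian_le_of_inner_midpoint_nonpos hx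
      (s := {ω | 0 ≤ φ ω}) fun ω (hω : 0 ≤ φ ω) => by
        rw [hφ] at hω
        rw [add_comm, ← neg_sub, inner_neg_left]
        linarith
    rwa [finrank_euclideanSpace_fin, norm_sub_rev] at h

/-- Risk of the optimal Gaussian separating test over convex sets: with `(μ*,ν*)` a
distance-minimizing pair of the disjoint nonempty convex compact sets `M₁, M₂` and
`φ(ω) = ½⟪μ*-ν*, ω - ½(μ*+ν*)⟫`, the probability of `φ < 0` under `N(μ, I_d)`, `μ ∈ M₁`,
and of `φ ≥ 0` under `N(ν, I_d)`, `ν ∈ M₂`, are at most `exp(-‖μ*-ν*‖²/8)`. -/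
theorem gaussian_convex_test_risk (d : ℕ)
    (M₁ M₂ : Set (EuclideanSpace ℝ (Fin d)))
    (h₁ne : M₁.Nonempty) (h₂ne : M₂.Nonempty)
    (h₁c : Convex ℝ M₁) (h₂c : Convex ℝ M₂)
    (h₁k : IsCompact M₁) (h₂k : IsCompact M₂)
    (μs νs : EuclideanSpace ℝ (Fin d)) (hμs : μs ∈ M₁) (hνs : νs ∈ M₂)
    (hpos : μs ≠ νs)
    (hmin : ∀ μ ∈ M₁, ∀ ν ∈ M₂, ‖μs - νs‖ ≤ ‖μ - ν‖)
    (φ : EuclideanSpace ℝ (Fin d) → ℝ)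
    (hφ : ∀ ω, φ ω = (1 / 2) * ⟪μs - νs, ω - (1 / 2 : ℝ) • (μs + νs)⟫) :
    (∀ μ ∈ M₁,
      (∫ ω in {ω : EuclideanSpace ℝ (Fin d) | φ ω < 0},
          (2 * Real.pi) ^ (-(d : ℝ) / 2) * Real.exp (-‖ω - μ‖ ^ 2 / 2))
        ≤ Real.exp (-‖μs - νs‖ ^ 2 / 8)) ∧
    (∀ ν ∈ M₂,
      (∫ ω in {ω : EuclideanSpace ℝ (Fin d) | 0 ≤ φ ω},
          (2 * Real.pi) ^ (-(d : ℝ) / 2) * Real.exp (-‖ω - ν‖ ^ 2 / 2))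
        ≤ Real.exp (-‖μs - νs‖ ^ 2 / 8)) :=
  gaussian_convex_test_risk_general d M₁ M₂ h₁c h₂c μs νs hμs hνs hmin φ hφ
end

section
/- Risk bound for the Perron–Frobenius-shifted multiple testing procedure (abstract form): let b, r be positive integers, E = [ε_{ij}] an entrywise positive b × r matrix with spectral norm ε̄, and [g; h] > 0 a Perron–Frobenius eigenvector of [[0,E],[Eᵀ,0]], so that Σ_j ε_{ij} h_j = ε̄ g_i for all i ≤ b and Σ_i ε_{ij} g_i = ε̄ h_j for all j ≤ r. Suppose P is a probability measure on Ω and φ_{ij} : Ω → ℝ are measurable functions with ∫ exp(-φ_{ij}(ω)) dP(ω) ≤ ε_{ij} for all i ≤ b, j ≤ r, for some fixed i = i₀. Then, setting ψ_{i₀ j}(ω) = φ_{i₀ j}(ω) - ln(h_j / g_{i₀}), one has P({ω : ∃ j ≤ r, ψ_{i₀ j}(ω) < 0}) ≤ ε̄. -/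
open MeasureTheory
open scoped BigOperators

/-- Risk bound for the Perron–Frobenius-shifted multiple testing procedure. -/
theorem perron_frobenius_shifted_test_risk
    (Ω : Type*) [MeasurableSpace Ω] (P : Measure Ω) [IsProbabilityMeasure P]
    (b r : ℕ) (hb : 0 < b) (hr : 0 < r)
    (E : Fin b → Fin r → ℝ) (hE : ∀ i j, 0 < E i j)
    (εbar : ℝ) (g : Fin b → ℝ) (h : Fin r → ℝ)
    (hg : ∀ i, 0 < g i) (hh : ∀ j, 0 < h j)
    (heig1 : ∀ i, ∑ j, E i j * h j = εbar * g i)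
    (heig2 : ∀ j, ∑ i, E i j * g i = εbar * h j)
    (φ : Fin b → Fin r → Ω → ℝ) (hφm : ∀ i j, Measurable (φ i j))
    (i₀ : Fin b)
    (hint : ∀ j, Integrable (fun ω => Real.exp (-φ i₀ j ω)) P)
    (hdet : ∀ j, ∫ ω, Real.exp (-φ i₀ j ω) ∂P ≤ E i₀ j) :
    P {ω | ∃ j, φ i₀ j ω - Real.log (h j / g i₀) < 0} ≤ ENNReal.ofReal εbar := by
  have hgi : 0 < g i₀ := hg i₀
  -- per-test Markov bound
  have key : ∀ j : Fin r,
      P {ω | φ i₀ j ω - Real.log (h j / g i₀) < 0}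
        ≤ ENNReal.ofReal (E i₀ j * (h j / g i₀)) := by
    intro j
    have hhj : 0 < h j := hh j
    have hratio : 0 < g i₀ / h j := div_pos hgi hhj
    set S : Set Ω := {ω | g i₀ / h j ≤ Real.exp (-φ i₀ j ω)} with hS
    have hsub : {ω | φ i₀ j ω - Real.log (h j / g i₀) < 0} ⊆ S := by
      intro ω hω
      simp only [Set.mem_setOf_eq, sub_neg] at hω
      have h1 : Real.exp (φ i₀ j ω) < h j / g i₀ := by
        calc Real.exp (φ i₀ j ω) < Real.exp (Real.log (h j / g i₀)) :=
              Real.exp_lt_exp.mpr hω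
          _ = h j / g i₀ := Real.exp_log (div_pos hhj hgi)
      have h2 : g i₀ / h j < Real.exp (-φ i₀ j ω) := by
        rw [Real.exp_neg]
        rw [lt_inv_comm₀ hratio (Real.exp_pos _)]
        simpa [one_div] using h1.trans_le (le_of_eq (by field_simp))
      exact h2.le
    have hmarkov := mul_meas_ge_le_integral_of_nonneg
      (μ := P) (f := fun ω => Real.exp (-φ i₀ j ω))
      (ae_of_all _ fun ω => (Real.exp_pos _).le) (hint j) (g i₀ / h j)
    have hPS : (P S).toReal ≤ E i₀ j * (h j / g i₀) := by
      have h2 : (g i₀ / h j) * (P S).toReal ≤ E i₀ j := hmarkov.trans (hdet j)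
      rw [div_mul_eq_mul_div, div_le_iff₀ hhj] at h2
      rw [← mul_div_assoc, le_div_iff₀ hgi]
      nlinarith
    calc P {ω | φ i₀ j ω - Real.log (h j / g i₀) < 0} ≤ P S := measure_mono hsub
      _ = ENNReal.ofReal (P S).toReal := (ENNReal.ofReal_toReal (measure_ne_top P S)).symm
      _ ≤ ENNReal.ofReal (E i₀ j * (h j / g i₀)) := ENNReal.ofReal_le_ofReal hPS
  -- union bound
  have hset : {ω | ∃ j, φ i₀ j ω - Real.log (h j / g i₀) < 0}
      = ⋃ j, {ω | φ i₀ j ω - Real.log (h j / g i₀) < 0} := by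
    ext ω; simp
  rw [hset]
  calc P (⋃ j, {ω | φ i₀ j ω - Real.log (h j / g i₀) < 0})
      ≤ ∑ j, P {ω | φ i₀ j ω - Real.log (h j / g i₀) < 0} := by
        simpa using measure_iUnion_fintype_le P _
    _ ≤ ∑ j, ENNReal.ofReal (E i₀ j * (h j / g i₀)) := Finset.sum_le_sum fun j _ => key j
    _ = ENNReal.ofReal (∑ j, E i₀ j * (h j / g i₀)) := by
        rw [ENNReal.ofReal_sum_of_nonneg]
        exact fun j _ => mul_nonneg (hE i₀ j).le (div_nonneg (hh j).le hgi.le)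
    _ = ENNReal.ofReal εbar := by
        congr 1
        have : ∑ j, E i₀ j * (h j / g i₀) = (∑ j, E i₀ j * h j) / g i₀ := by
          rw [Finset.sum_div]
          exact Finset.sum_congr rfl fun j _ => by ring
        rw [this, heig1 i₀, mul_div_assoc, div_self hgi.ne', mul_one]
end

section
/- Midpoint aggregation error bound: let w, w_i, w_j, u be points of a real inner product space with m = ½(w_i + w_j) and R = ½‖w_i - w_j‖, and let δ ≥ 0. Assume ‖w - w_i‖ ≤ ‖w - w_j‖ and ‖w - w_j‖² - ‖w - u‖² ≤ 4Rδ. Then ‖w - m‖² ≤ ‖w - u‖² + 4δ². -/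
/-- Midpoint aggregation error bound. -/
theorem midpoint_aggregation_bound (V : Type*) [NormedAddCommGroup V]
    [InnerProductSpace ℝ V] (w wi wj u : V)
    (m : V) (hm : m = (1 / 2 : ℝ) • (wi + wj))
    (R : ℝ) (hR : R = (1 / 2) * ‖wi - wj‖)
    (δ : ℝ) (hδ : 0 ≤ δ)
    (hle : ‖w - wi‖ ≤ ‖w - wj‖)
    (hgap : ‖w - wj‖ ^ 2 - ‖w - u‖ ^ 2 ≤ 4 * R * δ) :
    ‖w - m‖ ^ 2 ≤ ‖w - u‖ ^ 2 + 4 * δ ^ 2 := by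
  have hwm : w - m = (1 / 2 : ℝ) • ((w - wi) + (w - wj)) := by
    rw [hm]; module
  have hnm : ‖w - m‖ = (1 / 2) * ‖(w - wi) + (w - wj)‖ := by
    rw [hwm, norm_smul]; simp
  have hab : wi - wj = (w - wj) - (w - wi) := by abel
  have hRn : R = (1 / 2) * ‖(w - wi) - (w - wj)‖ := by
    rw [hR, hab, norm_sub_rev]
  have hpar := parallelogram_law_with_norm ℝ (w - wi) (w - wj)
  have h1 : (0:ℝ) ≤ ‖w - wi‖ := norm_nonneg _
  have h2 : (0:ℝ) ≤ ‖w - wj‖ := norm_nonneg _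
  nlinarith [sq_nonneg (R - 2 * δ), sq_nonneg (‖w - wi‖ - ‖w - wj‖),
    norm_nonneg ((w - wi) + (w - wj)), norm_nonneg ((w - wi) - (w - wj))]
end

section
/- Deterministic core of the score-based Euclidean aggregation bound: let (V, ‖·‖) be a seminormed real vector space, x, x₁, ..., x_N ∈ V, and Δ_{ij} = Δ_{ji} ≥ 0 given thresholds with Δ̄ = max_{i≠j} Δ_{ij}. Let ρ* = min_i ‖x - x_i‖. Suppose A ⊆ {(i,j) : i ≠ j} ('the test rejects hypothesis i against j') is a set such that: (a) if ‖x - x_j‖ ≥ ‖x - x_i‖ + Δ_{ij} then (i,j) ∉ A; and (b) for each i ≠ j, exactly one of (i,j) ∈ A, (j,i) ∈ A holds. Define scores s_i = #{j ≠ i : (i,j) ∈ A}, and let î minimize s_i. Then ‖x - x_î‖ ≤ ρ* + 2Δ̄. -/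
/-!
Let `i⋆` be a closest point. Call `j` white when `‖x - x_j‖ ≤ ρ⋆ + Δ̄`. Every `j` that `i⋆` rejects
is white by (a), and `i⋆` is white itself, so `i⋆` has score below the number `w` of white indices.
An index `k` with `‖x - x_k‖ > ρ⋆ + 2Δ̄` is farther than every white `j` by more than `Δ_{jk}`, so by
(a) no white `j` rejects `k`, and by (b) `k` rejects every white `j`: its score is at least `w`.
Hence the minimiser of the score is not that far out.
-/

namespace Tournament

variable {ι : Type*} [Finite ι]

noncomputable def score (A : ι → ι → Prop) (i : ι) : ℕ :=
  {j | j ≠ i ∧ A i j}.ncard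

variable {A : ι → ι → Prop} {d : ι → ℝ} {Δ : ι → ι → ℝ} {D : ℝ}

theorem score_lt_ncard (hA : ∀ i j, i ≠ j → d i + Δ i j ≤ d j → ¬ A i j)
    (hΔ : ∀ i j, i ≠ j → Δ i j ≤ D) (hD : 0 ≤ D) (i : ι) :
    score A i < {j | d j ≤ d i + D}.ncard := by
  have hsub : {j | j ≠ i ∧ A i j} ⊆ {j | d j ≤ d i + D} \ {i} := by
    rintro j ⟨hji, hAij⟩
    refine ⟨show d j ≤ d i + D from ?_, hji⟩
    by_contra! hfar
    exact hA i j hji.symm (by linarith [hΔ i j hji.symm]) hAij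
  have hi : i ∈ {j | d j ≤ d i + D} := show d i ≤ d i + D from le_add_of_nonneg_right hD
  calc score A i ≤ ({j | d j ≤ d i + D} \ {i}).ncard := Set.ncard_le_ncard hsub
    _ < {j | d j ≤ d i + D}.ncard := Set.ncard_sdiff_singleton_lt_of_mem hi

theorem ncard_le_score (hA : ∀ i j, i ≠ j → d i + Δ i j ≤ d j → ¬ A i j)
    (hcomplete : ∀ i j, i ≠ j → ¬ A j i → A i j)
    (hΔ : ∀ i j, i ≠ j → Δ i j ≤ D) (hD : 0 ≤ D) {i k : ι} (hk : d i + 2 * D < d k) :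
    {j | d j ≤ d i + D}.ncard ≤ score A k := by
  refine Set.ncard_le_ncard fun j (hj : d j ≤ d i + D) => ?_
  have hjk : j ≠ k := by
    rintro rfl
    linarith
  exact ⟨hjk, hcomplete k j hjk.symm (hA j k hjk (by linarith [hΔ j k hjk]))⟩

theorem le_add_two_mul_of_score_le (hA : ∀ i j, i ≠ j → d i + Δ i j ≤ d j → ¬ A i j)
    (hcomplete : ∀ i j, i ≠ j → ¬ A j i → A i j)
    (hΔ : ∀ i j, i ≠ j → Δ i j ≤ D) (hD : 0 ≤ D) {i k : ι} (hki : score A k ≤ score A i) :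
    d k ≤ d i + 2 * D := by
  by_contra! hk
  have := (ncard_le_score hA hcomplete hΔ hD hk).trans hki
  exact this.not_gt (score_lt_ncard hA hΔ hD i)

end Tournament

theorem le_sSup_of_ne {ι : Type*} [Finite ι] (Δ : ι → ι → ℝ) {i j : ι} (hij : i ≠ j) :
    Δ i j ≤ sSup {a : ℝ | ∃ i j, i ≠ j ∧ a = Δ i j} := by
  refine le_csSup ((Set.finite_range (Function.uncurry Δ)).bddAbove.mono ?_) ⟨i, j, hij, rfl⟩
  rintro _ ⟨i, j, -, rfl⟩
  exact ⟨(i, j), rfl⟩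

theorem score_aggregation_bound_general (V : Type*) [SeminormedAddCommGroup V]
    (N : ℕ)
    (x : V) (xs : Fin N → V)
    (Δ : Fin N → Fin N → ℝ) (hΔ0 : ∀ i j, 0 ≤ Δ i j)
    (Δbar : ℝ) (hΔbar : Δbar = sSup {a : ℝ | ∃ i j, i ≠ j ∧ a = Δ i j})
    (ρstar : ℝ) (hρ : ρstar = sInf {a : ℝ | ∃ i, a = ‖x - xs i‖})
    (A : Fin N → Fin N → Prop)
    (ha : ∀ i j, i ≠ j → ‖x - xs j‖ ≥ ‖x - xs i‖ + Δ i j → ¬ A i j)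
    (hb : ∀ i j, i ≠ j → (A i j ↔ ¬ A j i))
    (s : Fin N → ℕ) (hs : ∀ i, s i = Set.ncard {j : Fin N | j ≠ i ∧ A i j})
    (ihat : Fin N) (hmin : ∀ i, s ihat ≤ s i) :
    ‖x - xs ihat‖ ≤ ρstar + 2 * Δbar := by
  have : Nonempty (Fin N) := ⟨ihat⟩
  obtain ⟨istar, hclosest⟩ := exists_eq_ciInf_of_finite (f := fun i => ‖x - xs i‖)
  have hρstar : ρstar = ‖x - xs istar‖ := by
    rw [hρ, hclosest, iInf]
    congr 1
    ext
    exact exists_congr fun _ => eq_comm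
  have hΔle : ∀ i j, i ≠ j → Δ i j ≤ Δbar := fun i j hij => hΔbar ▸ le_sSup_of_ne Δ hij
  have hΔbar0 : 0 ≤ Δbar := hΔbar ▸ Real.sSup_nonneg fun _ ⟨i, j, _, hij⟩ => hij ▸ hΔ0 i j
  have hscore : Tournament.score A ihat ≤ Tournament.score A istar := by
    simpa only [Tournament.score, hs] using hmin istar
  rw [hρstar]
  exact Tournament.le_add_two_mul_of_score_le ha (fun i j hij => (hb i j hij).2) hΔle hΔbar0 hscore

/-- Deterministic core of the score-based Euclidean aggregation bound. -/
theorem score_aggregation_bound (V : Type*) [SeminormedAddCommGroup V]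
    [NormedSpace ℝ V] (N : ℕ) (hN : 0 < N)
    (x : V) (xs : Fin N → V)
    (Δ : Fin N → Fin N → ℝ) (hΔsym : ∀ i j, Δ i j = Δ j i) (hΔ0 : ∀ i j, 0 ≤ Δ i j)
    (Δbar : ℝ) (hΔbar : Δbar = sSup {a : ℝ | ∃ i j, i ≠ j ∧ a = Δ i j})
    (ρstar : ℝ) (hρ : ρstar = sInf {a : ℝ | ∃ i, a = ‖x - xs i‖})
    (A : Fin N → Fin N → Prop)
    (ha : ∀ i j, i ≠ j → ‖x - xs j‖ ≥ ‖x - xs i‖ + Δ i j → ¬ A i j)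
    (hb : ∀ i j, i ≠ j → (A i j ↔ ¬ A j i))
    (s : Fin N → ℕ) (hs : ∀ i, s i = Set.ncard {j : Fin N | j ≠ i ∧ A i j})
    (ihat : Fin N) (hmin : ∀ i, s ihat ≤ s i) :
    ‖x - xs ihat‖ ≤ ρstar + 2 * Δbar :=
  score_aggregation_bound_general V N x xs Δ hΔ0 Δbar hΔbar ρstar hρ A ha hb s hs ihat hmin
end

section
/- Derandomization of estimates at the cost of doubling the risk and the accuracy: let Y be a set, (Ω, F) a measurable space, and for each x ∈ Y let P_x be a probability measure on Ω. Let U be Lebesgue measure on [0,1], ρ > 0, 0 < υ < 1/4, and let φ : Ω × [0,1] → ℝⁿ be measurable (with respect to the product σ-algebra) and satisfy, for every x ∈ Y, (P_x × U)({(ω, ζ) : ‖φ(ω,ζ) - x‖ > ρ}) ≤ υ, where ‖·‖ is a seminorm on ℝⁿ. Then there exists a function ψ : Ω → ℝⁿ such that for every x ∈ Y, the outer P_x-measure of {ω : ‖ψ(ω) - x‖ > 2ρ} is at most 2υ. -/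
/-!
For each `ω`, let `ψ(ω)` be any point `y` such that the randomized estimate `φ(ω, ·)` is within
`ρ` of `y` with probability more than `1/2`. Two events of probability more than `1/2` intersect,
so whenever `x` is such a point as well, the triangle inequality gives `‖ψ(ω) - x‖ ≤ 2ρ`. Hence
`ψ` fails at `ω` only if `φ(ω, ·)` misses `x` by more than `ρ` with probability at least `1/2`,
and by Fubini and Markov's inequality this has `P_x`-probability at most `2υ`.
-/

open MeasureTheory

open scoped ENNReal

section MajorityCenter

variable {Z E F : Type*} [MeasurableSpace Z] [AddCommGroup E] [FunLike F E ℝ]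
  {U : Measure Z} {p : F} {ρ : ℝ} {f : Z → E} {y y' : E}

def IsMajorityCenter (U : Measure Z) (p : F) (ρ : ℝ) (f : Z → E) (y : E) : Prop :=
  U {ζ | ρ < p (f ζ - y)} < 1 / 2

/-- An arbitrary point when `f` has no majority center. -/
noncomputable def majorityCenter (U : Measure Z) (p : F) (ρ : ℝ) (f : Z → E) : E :=
  Classical.epsilon (IsMajorityCenter U p ρ f)

lemma IsMajorityCenter.isMajorityCenter_majorityCenter (h : IsMajorityCenter U p ρ f y) :
    IsMajorityCenter U p ρ f (majorityCenter U p ρ f) :=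
  Classical.epsilon_spec ⟨y, h⟩

lemma IsMajorityCenter.map_sub_le_two_mul [AddGroupSeminormClass F E ℝ]
    [IsProbabilityMeasure U]
    (hy : IsMajorityCenter U p ρ f y) (hy' : IsMajorityCenter U p ρ f y') :
    p (y - y') ≤ 2 * ρ := by
  have hcover : {ζ | ρ < p (f ζ - y)} ∪ {ζ | ρ < p (f ζ - y')} ≠ Set.univ := by
    intro h
    have hle := measure_union_le (μ := U) {ζ | ρ < p (f ζ - y)} {ζ | ρ < p (f ζ - y')}
    rw [h, measure_univ] at hle
    exact (hle.trans_lt (ENNReal.add_lt_add hy hy')).ne (ENNReal.add_halves 1).symm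
  obtain ⟨ζ, hζ⟩ := Set.ne_univ_iff_exists_notMem _ |>.mp hcover
  simp only [Set.mem_union, Set.mem_ofPred_eq, not_or, not_lt] at hζ
  calc p (y - y') = p ((f ζ - y') - (f ζ - y)) := by rw [sub_sub_sub_cancel_left]
    _ ≤ p (f ζ - y') + p (f ζ - y) := map_sub_le_add p _ _
    _ ≤ 2 * ρ := by linarith [hζ.1, hζ.2]

lemma IsMajorityCenter.map_majorityCenter_sub_le_two_mul [AddGroupSeminormClass F E ℝ]
    [IsProbabilityMeasure U]
    (h : IsMajorityCenter U p ρ f y) : p (majorityCenter U p ρ f - y) ≤ 2 * ρ :=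
  h.isMajorityCenter_majorityCenter.map_sub_le_two_mul h

end MajorityCenter

lemma meas_section_ge_le_prod_div {α β : Type*} [MeasurableSpace α] [MeasurableSpace β]
    (μ : Measure α) (ν : Measure β) [SFinite ν] {s : Set (α × β)} (hs : MeasurableSet s)
    {ε : ℝ≥0∞} (hε : ε ≠ 0) (hε' : ε ≠ ∞) :
    μ {x | ε ≤ ν (Prod.mk x ⁻¹' s)} ≤ μ.prod ν s / ε := by
  rw [Measure.prod_apply hs]
  exact meas_ge_le_lintegral_div (measurable_measure_prodMk_left hs).aemeasurable hε hε'

theorem derandomization_general (n : ℕ) (Y : Set (Fin n → ℝ))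
    (Ω : Type*) [MeasurableSpace Ω] (P : (Fin n → ℝ) → Measure Ω)
    (nrm : Seminorm ℝ (Fin n → ℝ))
    (ρ υ : ℝ)
    (φ : Ω → ℝ → (Fin n → ℝ))
    (hφm : Measurable (fun p : Ω × ℝ => φ p.1 p.2))
    (hrisk : ∀ x ∈ Y,
      ((P x).prod ((volume : Measure ℝ).restrict (Set.Icc 0 1)))
        {p : Ω × ℝ | ρ < nrm (φ p.1 p.2 - x)} ≤ ENNReal.ofReal υ) :
    ∃ ψ : Ω → (Fin n → ℝ), ∀ x ∈ Y,
      P x {ω | 2 * ρ < nrm (ψ ω - x)} ≤ ENNReal.ofReal (2 * υ) := by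
  set U : Measure ℝ := (volume : Measure ℝ).restrict (Set.Icc 0 1)
  have : IsProbabilityMeasure U := ⟨by simp [U]⟩
  refine ⟨fun ω => majorityCenter U nrm ρ (φ ω), fun x hx => ?_⟩
  set S := {p : Ω × ℝ | ρ < nrm (φ p.1 p.2 - x)}
  have hS : MeasurableSet S := measurableSet_lt measurable_const
    (nrm.convexOn.locallyLipschitz.continuous.measurable.comp (hφm.sub_const x))
  have hfail : {ω | 2 * ρ < nrm (majorityCenter U nrm ρ (φ ω) - x)} ⊆
      {ω | 1 / 2 ≤ U (Prod.mk ω ⁻¹' S)} := fun ω hω => by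
    by_contra hmaj
    exact hω.not_ge (IsMajorityCenter.map_majorityCenter_sub_le_two_mul (not_le.mp hmaj))
  calc P x {ω | 2 * ρ < nrm (majorityCenter U nrm ρ (φ ω) - x)}
      ≤ P x {ω | 1 / 2 ≤ U (Prod.mk ω ⁻¹' S)} := measure_mono hfail
    _ ≤ (P x).prod U S / (1 / 2) := meas_section_ge_le_prod_div _ _ hS (by simp) (by simp)
    _ ≤ ENNReal.ofReal υ / (1 / 2) := by gcongr; exact hrisk x hx
    _ = ENNReal.ofReal (2 * υ) := by
      rw [ENNReal.ofReal_mul zero_le_two, ENNReal.div_eq_inv_mul, one_div, inv_inv,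
        ENNReal.ofReal_ofNat]

/-- Derandomization of estimates at the cost of doubling the risk and accuracy: if a
randomized estimate `φ(ω,ζ)` (with `ζ` uniform on `[0,1]`) recovers every `x ∈ Y` within
`ρ` with probability `≥ 1 - υ`, `υ < 1/4`, then there is a deterministic `ψ(ω)` recovering
every `x ∈ Y` within `2ρ` with outer probability of failure at most `2υ`. -/
theorem derandomization (n : ℕ) (Y : Set (Fin n → ℝ))
    (Ω : Type*) [MeasurableSpace Ω] (P : (Fin n → ℝ) → Measure Ω)
    (hP : ∀ x ∈ Y, IsProbabilityMeasure (P x))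
    (nrm : Seminorm ℝ (Fin n → ℝ))
    (ρ υ : ℝ) (hρ : 0 < ρ) (hυ0 : 0 < υ) (hυ : υ < 1 / 4)
    (φ : Ω → ℝ → (Fin n → ℝ))
    (hφm : Measurable (fun p : Ω × ℝ => φ p.1 p.2))
    (hrisk : ∀ x ∈ Y,
      ((P x).prod ((volume : Measure ℝ).restrict (Set.Icc 0 1)))
        {p : Ω × ℝ | ρ < nrm (φ p.1 p.2 - x)} ≤ ENNReal.ofReal υ) :
    ∃ ψ : Ω → (Fin n → ℝ), ∀ x ∈ Y,
      P x {ω | 2 * ρ < nrm (ψ ω - x)} ≤ ENNReal.ofReal (2 * υ) :=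
  derandomization_general n Y Ω P nrm ρ υ φ hφm hrisk
end
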